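/- arXiv:2104.06050 — 8 statements merged into one kernel-verified Lean document; each statement's English description precedes it below -/
import Mathlib

section
/- Let k ≥ 1 be an integer, b a positive real number, and λ a real number with 0 < λ/k < 1. Define q_i = (1 − λ/k)^{k−i} · (λ/k) / (1 − (1 − λ/k)^k) for 1 ≤ i ≤ k. Then ∑_{i=1}^{k} (b + i − 1)·q_i ≤ b − k/λ + k/(1 − (1 − λ/k)^k). -/
/-!
With `r = 1 - λ/k`, the weights are `q_i = r^(k-i) (1 - r) / (1 - r^k)`, a geometric distribution
truncated to `{1, …, k}`. The closed forms of the geometric sum `∑ r^(k-i)` and of the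
arithmetico-geometric sum `∑ (i - 1) r^(k-i)` show that the expected cost equals
`b - 1/(1 - r) + k/(1 - r^k)` exactly, and `k/λ = 1/(1 - r)`.
-/

open Finset

section ArithmeticoGeometric

variable {R : Type*} [CommRing R]

theorem sum_Icc_mul_pow_sub_succ (g : ℕ → R) (r : R) (n : ℕ) :
    ∑ i ∈ Icc 1 (n + 1), g i * r ^ (n + 1 - i)
      = r * ∑ i ∈ Icc 1 n, g i * r ^ (n - i) + g (n + 1) := by
  rw [sum_Icc_succ_top (by omega), Nat.sub_self, pow_zero, mul_one, mul_sum]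
  congr 1
  refine sum_congr rfl fun i hi => ?_
  rw [Nat.sub_add_comm (mem_Icc.1 hi).2, pow_succ]
  ring

theorem one_sub_mul_sum_Icc_pow_sub (r : R) (k : ℕ) :
    (1 - r) * ∑ i ∈ Icc 1 k, r ^ (k - i) = 1 - r ^ k := by
  induction k with
  | zero => simp
  | succ n ih =>
    have step := sum_Icc_mul_pow_sub_succ (fun _ => (1 : R)) r n
    simp only [one_mul] at step
    rw [step]
    linear_combination r * ih

theorem one_sub_sq_mul_sum_Icc_sub_one_mul_pow_sub (r : R) (k : ℕ) :
    (1 - r) ^ 2 * ∑ i ∈ Icc 1 k, ((i : R) - 1) * r ^ (k - i) = k - 1 - k * r + r ^ k := by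
  induction k with
  | zero => simp
  | succ n ih =>
    rw [sum_Icc_mul_pow_sub_succ]
    push_cast
    linear_combination r * ih

end ArithmeticoGeometric

def truncGeomWeight {K : Type*} [Field K] (r : K) (k i : ℕ) : K :=
  r ^ (k - i) * (1 - r) / (1 - r ^ k)

theorem sum_Icc_add_sub_one_mul_truncGeomWeight {K : Type*} [Field K] (b r : K) (k : ℕ)
    (hD : 1 - r ^ k ≠ 0) :
    ∑ i ∈ Icc 1 k, (b + i - 1) * truncGeomWeight r k i = b - 1 / (1 - r) + k / (1 - r ^ k) := by
  have hr : 1 - r ≠ 0 := by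
    intro h
    apply hD
    rw [show r = 1 by linear_combination -h, one_pow, sub_self]
  have hsplit : ∑ i ∈ Icc 1 k, (b + i - 1) * truncGeomWeight r k i
      = (1 - r) / (1 - r ^ k) *
        (b * ∑ i ∈ Icc 1 k, r ^ (k - i) + ∑ i ∈ Icc 1 k, ((i : K) - 1) * r ^ (k - i)) := by
    rw [mul_sum, ← sum_add_distrib, mul_sum]
    refine sum_congr rfl fun i _ => ?_
    rw [truncGeomWeight]
    ring
  have hG := one_sub_mul_sum_Icc_pow_sub r k
  have hA := one_sub_sq_mul_sum_Icc_sub_one_mul_pow_sub r k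
  rw [hsplit]
  field_simp
  linear_combination (1 - r) * b * hG + hA

theorem costRobust_q_expected_cost_general (k : ℕ) (b : ℝ) (lam : ℝ)
    (h₀ : 0 < lam / k) (h₁ : lam / k < 1)
    (q : ℕ → ℝ)
    (hq : ∀ i ∈ Finset.Icc 1 k,
      q i = (1 - lam / k) ^ (k - i) * (lam / k) / (1 - (1 - lam / k) ^ k)) :
    ∑ i ∈ Finset.Icc 1 k, (b + i - 1) * q i
      ≤ b - k / lam + k / (1 - (1 - lam / k) ^ k) := by
  have hk : k ≠ 0 := by
    rintro rfl
    simp at h₀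
  set r := 1 - lam / k with hr
  have hD : 1 - r ^ k ≠ 0 :=
    (sub_pos.2 (pow_lt_one₀ (by linarith) (by linarith) hk)).ne'
  have hp : lam / k = 1 - r := by rw [hr]; ring
  have hq' : ∀ i ∈ Icc 1 k, q i = truncGeomWeight r k i := fun i hi => by
    rw [hq i hi, hp, truncGeomWeight]
  have hkl : (k : ℝ) / lam = 1 / (1 - r) := by rw [← hp, one_div_div]
  rw [sum_congr rfl fun i hi => by rw [hq' i hi], sum_Icc_add_sub_one_mul_truncGeomWeight b r k hD,
    hkl]

/-- Expected-cost bound for the CostRobust distribution `q`: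
`∑_{i=1}^{k} (b + i − 1) q_i ≤ b − k/λ + k/(1 − (1 − λ/k)^k)`. -/
theorem costRobust_q_expected_cost (k : ℕ) (hk : 1 ≤ k) (b : ℝ) (hb : 0 < b) (lam : ℝ)
    (h₀ : 0 < lam / k) (h₁ : lam / k < 1)
    (q : ℕ → ℝ)
    (hq : ∀ i ∈ Finset.Icc 1 k,
      q i = (1 - lam / k) ^ (k - i) * (lam / k) / (1 - (1 - lam / k) ^ k)) :
    ∑ i ∈ Finset.Icc 1 k, (b + i - 1) * q i
      ≤ b - k / lam + k / (1 - (1 - lam / k) ^ k) :=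
  costRobust_q_expected_cost_general k b lam h₀ h₁ q hq
end

section
/- Let b ≥ 2 be an integer and λ ∈ (1/b, 1] a real number. Set k = ⌊λb⌋ and define q_i = (1 − λ/k)^{k−i} · (λ/k) / (1 − (1 − λ/k)^k) for 1 ≤ i ≤ k. Then ∑_{i=1}^{k} (b + i − 1)·q_i ≤ (λ/(1 − e^{−λ}))·b. -/
open Finset Real

/-!
Summing the arithmetico-geometric series, the expected cost is exactly
`b - k/λ + k/(1 - (1 - λ/k)^k)`. Since `(1 - λ/k)^k ≤ e^{-λ}`, the last denominator is at least
`v = 1 - e^{-λ}`, and `b - k/λ + k/v ≤ λb/v` is equivalent to `(λ - v)(λb - k) ≥ 0`, which holds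
because `v ≤ λ` and `k ≤ λb`.
-/

theorem Int.sum_Icc_one_natCast {M : Type*} [AddCommMonoid M] (n : ℕ) (f : ℤ → M) :
    ∑ i ∈ Icc (1 : ℤ) n, f i = ∑ j ∈ Finset.range n, f (j + 1) := by
  rw [Int.Icc_eq_finset_map, sum_map]
  simp only [add_sub_cancel_right, Int.toNat_natCast, Function.Embedding.trans_apply,
    Nat.castEmbedding_apply, addLeftEmbedding_apply, add_comm]

theorem one_sub_sq_mul_sum_range_add_mul_pow (a r : ℝ) (n : ℕ) :
    (1 - r) ^ 2 * ∑ j ∈ range n, (a + j) * r ^ (n - 1 - j)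
      = (a * (1 - r) - 1) * (1 - r ^ n) + n * (1 - r) := by
  induction n with
  | zero => simp
  | succ m ih =>
    have hrec : ∑ j ∈ range (m + 1), (a + j) * r ^ (m + 1 - 1 - j)
        = r * ∑ j ∈ range m, (a + j) * r ^ (m - 1 - j) + (a + m) := by
      rw [sum_range_succ, mul_sum, Nat.add_sub_cancel, Nat.sub_self, pow_zero, mul_one]
      congr 1
      refine sum_congr rfl fun j hj => ?_
      rw [show m - j = (m - 1 - j) + 1 by have := mem_range.1 hj; omega, pow_succ]
      ring
    rw [hrec]
    push_cast
    linear_combination r * ih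

/-- The paper's `q_i`, with `s = λ/k` and `n = k`. -/
noncomputable def truncGeom (s : ℝ) (n : ℕ) (i : ℤ) : ℝ :=
  (1 - s) ^ ((n : ℤ) - i) * s / (1 - (1 - s) ^ n)

theorem sum_Icc_mul_truncGeom (a s : ℝ) (n : ℕ) (hs : s ≠ 0) (hsn : (1 - s) ^ n ≠ 1) :
    ∑ i ∈ Icc (1 : ℤ) n, (a + i - 1) * truncGeom s n i = a - 1 / s + n / (1 - (1 - s) ^ n) := by
  have hu : 1 - (1 - s) ^ n ≠ 0 := sub_ne_zero.2 (Ne.symm hsn)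
  have hterm : ∀ j ∈ range n, (a + ((j + 1 : ℤ) : ℝ) - 1) * truncGeom s n (j + 1)
      = (a + j) * (1 - s) ^ (n - 1 - j) * (s / (1 - (1 - s) ^ n)) := by
    intro j hj
    rw [truncGeom, show (n : ℤ) - (j + 1) = ((n - 1 - j : ℕ) : ℤ) by
      have := mem_range.1 hj; omega, zpow_natCast]
    push_cast
    ring
  rw [Int.sum_Icc_one_natCast, sum_congr rfl hterm, ← sum_mul]
  have hid := one_sub_sq_mul_sum_range_add_mul_pow a (1 - s) n
  rw [sub_sub_cancel] at hid
  field_simp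
  linear_combination hid

theorem sub_div_add_div_le_div_mul {lam b n u v : ℝ} (hlam : 0 < lam) (hv : 0 < v)
    (hvu : v ≤ u) (hvlam : v ≤ lam) (hn : 0 ≤ n) (hnb : n ≤ lam * b) :
    b - n / lam + n / u ≤ lam / v * b := by
  have hdiff : lam / v * b - (b - n / lam + n / v) = (lam - v) * (lam * b - n) / (lam * v) := by
    field_simp
    ring
  have hmono : n / u ≤ n / v := div_le_div_of_nonneg_left hn hv hvu
  have hgap : 0 ≤ (lam - v) * (lam * b - n) / (lam * v) := by
    have := sub_nonneg.2 hvlam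
    have := sub_nonneg.2 hnb
    positivity
  linarith

/-- Case `y ≥ b`, `x ≥ k` of Theorem 2: the expected cost of the CostRobust
randomized algorithm is at most `(λ/(1 − e^{−λ}))·b`. -/
theorem costRobust_consistency_case1 (b : ℕ) (hb : 2 ≤ b) (lam : ℝ)
    (hlam₁ : 1 / (b : ℝ) < lam) (hlam₂ : lam ≤ 1)
    (k : ℤ) (hk : k = ⌊lam * (b : ℝ)⌋)
    (q : ℤ → ℝ)
    (hq : ∀ i ∈ Finset.Icc 1 k,
      q i = (1 - lam / (k : ℝ)) ^ (k - i) * (lam / (k : ℝ)) / (1 - (1 - lam / (k : ℝ)) ^ k)) :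
    ∑ i ∈ Finset.Icc 1 k, ((b : ℝ) + (i : ℝ) - 1) * q i
      ≤ (lam / (1 - Real.exp (-lam))) * (b : ℝ) := by
  have hb0 : (0 : ℝ) < b := by exact_mod_cast (by omega : 0 < b)
  have hlam0 : 0 < lam := (one_div_pos.2 hb0).trans hlam₁
  have hk1 : 1 ≤ k := hk ▸ Int.le_floor.2 (by push_cast; linarith [(div_lt_iff₀ hb0).1 hlam₁])
  obtain ⟨n, rfl⟩ := Int.eq_ofNat_of_zero_le (by omega : 0 ≤ k)
  have hn : (1 : ℝ) ≤ n := by exact_mod_cast hk1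
  have hnb : (n : ℝ) ≤ lam * b := by exact_mod_cast hk ▸ Int.floor_le (lam * b)
  have hv : 0 < 1 - exp (-lam) := sub_pos.2 (exp_lt_one_iff.2 (neg_lt_zero.2 hlam0))
  have hvu : 1 - exp (-lam) ≤ 1 - (1 - lam / n) ^ n :=
    sub_le_sub_left (one_sub_div_pow_le_exp_neg (hlam₂.trans hn)) 1
  have hvlam : 1 - exp (-lam) ≤ lam := by linarith [add_one_le_exp (-lam)]
  have hq' : ∀ i ∈ Icc (1 : ℤ) n, q i = truncGeom (lam / n) n i := by
    intro i hi
    rw [hq i hi, truncGeom, Int.cast_natCast, zpow_natCast]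
  rw [sum_congr rfl fun i hi => by rw [hq' i hi], sum_Icc_mul_truncGeom _ _ _ (by positivity)
    (by linarith), one_div_div]
  exact sub_div_add_div_le_div_mul hlam0 hv hvu hvlam (by positivity) hnb
end

section
/- Let b ≥ 2 be an integer and λ ∈ (1/b, 1] a real number. Set k = ⌊λb⌋, suppose k ≥ 2, and define q_i = (1 − λ/k)^{k−i} · (λ/k) / (1 − (1 − λ/k)^k) for 1 ≤ i ≤ k. Then for every integer x with 1 ≤ x < k, ∑_{i=1}^{x} (b + i − 1)·q_i + x·∑_{i=x+1}^{k} q_i ≤ ((1 + 1/⌊λb⌋)/(1 − e^{−λ}))·x. -/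
/-!
With `p = λ/k` the weights are `q_i = p (1 - p)^{k-i} / (1 - (1 - p)^k)`. Splitting
`(b + i - 1) p = (b p - 1) + ((i - 1) p + 1)` makes both sums telescope, and the numerator of the
expected cost becomes `x + (b - 1/p) ((1 - p)^{k-x} - (1 - p)^k)`. Since `k = ⌊λb⌋` we have
`b - 1/p ≤ 1/λ`, and by Bernoulli `(1 - p)^{k-x} - (1 - p)^k ≤ x p`, so the numerator is at most
`(1 + 1/k) x`. Finally `(1 - λ/k)^k ≤ e^{-λ}` bounds the normaliser from below.
-/

open Finset Real

theorem Int.sum_Ioc_sub {M : Type*} [AddCommGroup M] (f : ℤ → M) {m n : ℤ}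
    (hmn : m ≤ n) : ∑ i ∈ Ioc m n, (f i - f (i - 1)) = f n - f m := by
  induction n, hmn using Int.leInduction with
  | base => simp
  | succ n hmn ih =>
    rw [← insert_Ioc_right_eq_Ioc_add_one hmn, sum_insert (by simp), ih, add_sub_cancel_right]
    abel

theorem one_sub_div_zpow_le_exp_neg {k : ℤ} (hk : 0 ≤ k) {t : ℝ} (ht : t ≤ k) :
    (1 - t / k) ^ k ≤ exp (-t) := by
  lift k to ℕ using hk
  exact_mod_cast one_sub_div_pow_le_exp_neg (by exact_mod_cast ht)

noncomputable def expectedCost (b : ℝ) (q : ℤ → ℝ) (k x : ℤ) : ℝ :=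
  ∑ i ∈ Icc 1 x, (b + (i : ℝ) - 1) * q i + (x : ℝ) * ∑ i ∈ Icc (x + 1) k, q i

theorem expectedCost_eq_div {b D : ℝ} {q w : ℤ → ℝ} {k x : ℤ}
    (hq : ∀ i ∈ Icc 1 k, q i = w i / D) (hx0 : 0 ≤ x) (hxk : x ≤ k) :
    expectedCost b q k x = expectedCost b w k x / D := by
  have hbuy : ∑ i ∈ Icc 1 x, (b + (i : ℝ) - 1) * q i
      = (∑ i ∈ Icc 1 x, (b + (i : ℝ) - 1) * w i) / D := by
    rw [sum_div]
    refine sum_congr rfl fun i hi => ?_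
    rw [hq i (by simp only [mem_Icc] at hi ⊢; omega), mul_div_assoc]
  have hrent : ∑ i ∈ Icc (x + 1) k, q i = (∑ i ∈ Icc (x + 1) k, w i) / D := by
    rw [sum_div]
    exact sum_congr rfl fun i hi => hq i (by simp only [mem_Icc] at hi ⊢; omega)
  rw [expectedCost, expectedCost, hbuy, hrent]
  ring

section Geometric

variable {p : ℝ} {k m n : ℤ}

theorem sum_Ioc_zpow_mul (hr : 1 - p ≠ 0) (hmn : m ≤ n) :
    ∑ i ∈ Ioc m n, (1 - p) ^ (k - i) * p = (1 - p) ^ (k - n) - (1 - p) ^ (k - m) := by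
  rw [← Int.sum_Ioc_sub (fun i => (1 - p) ^ (k - i)) hmn]
  refine sum_congr rfl fun i _ => ?_
  rw [show k - (i - 1) = k - i + 1 by ring, zpow_add_one₀ hr]
  ring

theorem sum_Ioc_mul_zpow (hr : 1 - p ≠ 0) (hmn : m ≤ n) :
    ∑ i ∈ Ioc m n, (((i : ℝ) - 1) * p + 1) * (1 - p) ^ (k - i)
      = n * (1 - p) ^ (k - n) - m * (1 - p) ^ (k - m) := by
  rw [← Int.sum_Ioc_sub (fun i : ℤ => (i : ℝ) * (1 - p) ^ (k - i)) hmn]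
  refine sum_congr rfl fun i _ => ?_
  rw [show k - (i - 1) = k - i + 1 by ring, zpow_add_one₀ hr]
  push_cast
  ring

theorem expectedCost_geometric (hp : p ≠ 0) (hr : 1 - p ≠ 0) (b : ℝ) {x : ℤ}
    (hx0 : 0 ≤ x) (hxk : x ≤ k) :
    expectedCost b (fun i => (1 - p) ^ (k - i) * p) k x
      = x + (b - 1 / p) * ((1 - p) ^ (k - x) - (1 - p) ^ k) := by
  have hsplit : ∀ i : ℤ, (b + (i : ℝ) - 1) * ((1 - p) ^ (k - i) * p)
      = (b - 1 / p) * ((1 - p) ^ (k - i) * p) + (((i : ℝ) - 1) * p + 1) * (1 - p) ^ (k - i) := by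
    intro i
    field_simp
    ring
  have hIcc : Icc (1 : ℤ) x = Ioc 0 x := by simpa using Icc_add_one_left_eq_Ioc (0 : ℤ) x
  rw [expectedCost, hIcc, Icc_add_one_left_eq_Ioc]
  simp only [hsplit, sum_add_distrib, ← mul_sum, sum_Ioc_zpow_mul hr hx0, sum_Ioc_zpow_mul hr hxk,
    sum_Ioc_mul_zpow hr hx0]
  simp only [sub_self, sub_zero, zpow_zero, Int.cast_zero, zero_mul]
  ring

theorem zpow_sub_sub_zpow_nonneg (hp0 : 0 ≤ p) (hp1 : p < 1) {x : ℤ} (hx0 : 0 ≤ x) :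
    0 ≤ (1 - p) ^ (k - x) - (1 - p) ^ k :=
  sub_nonneg.2 (zpow_le_zpow_right_of_le_one₀ (by linarith) (by linarith) (by linarith))

theorem zpow_sub_sub_zpow_le (hp0 : 0 ≤ p) (hp1 : p < 1) {x : ℤ} (hx0 : 0 ≤ x) (hxk : x ≤ k) :
    (1 - p) ^ (k - x) - (1 - p) ^ k ≤ x * p := by
  have hr : 0 < 1 - p := by linarith
  have hfactor : (1 - p) ^ (k - x) - (1 - p) ^ k = (1 - p) ^ (k - x) * (1 - (1 - p) ^ x) := by
    rw [mul_one_sub, ← zpow_add₀ hr.ne', sub_add_cancel]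
  lift x to ℕ using hx0
  have hbernoulli := one_add_mul_le_pow (a := -p) (by linarith) x
  rw [← sub_eq_add_neg] at hbernoulli
  rw [hfactor, zpow_natCast]
  refine (mul_le_of_le_one_left ?_ (zpow_le_one₀ hr (by linarith) (by omega))).trans ?_
  · exact sub_nonneg.2 (pow_le_one₀ hr.le (by linarith))
  · push_cast
    linarith

theorem costRobust_numerator_le {lam b : ℝ} {x : ℤ} (hlam : 0 < lam) (hk : 0 < k)
    (hfloor : lam * b < k + 1) (hp1 : lam / k < 1) (hx0 : 0 ≤ x) (hxk : x ≤ k) :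
    x + (b - 1 / (lam / k)) * ((1 - lam / k) ^ (k - x) - (1 - lam / k) ^ k) ≤ (1 + 1 / k) * x :=
  have hp0 : 0 ≤ lam / k := by positivity
  calc _ ≤ x + 1 / lam * (x * (lam / k)) := by
        gcongr
        · exact zpow_sub_sub_zpow_nonneg hp0 hp1 hx0
        · rw [one_div_div, sub_le_iff_le_add, ← add_div, le_div_iff₀ hlam]
          linarith
        · exact zpow_sub_sub_zpow_le hp0 hp1 hx0 hxk
    _ = (1 + 1 / k) * x := by field_simp

end Geometric

theorem costRobust_robustness_case2_general (b : ℕ) (lam : ℝ)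
    (hlam₁ : 1 / (b : ℝ) < lam) (hlam₂ : lam ≤ 1)
    (k : ℤ) (hk : k = ⌊lam * (b : ℝ)⌋) (hk2 : 2 ≤ k)
    (q : ℤ → ℝ)
    (hq : ∀ i ∈ Finset.Icc 1 k,
      q i = (1 - lam / (k : ℝ)) ^ (k - i) * (lam / (k : ℝ)) / (1 - (1 - lam / (k : ℝ)) ^ k))
    (x : ℤ) (hx1 : 1 ≤ x) (hxk : x < k) :
    ∑ i ∈ Finset.Icc 1 x, ((b : ℝ) + (i : ℝ) - 1) * q i
        + (x : ℝ) * ∑ i ∈ Finset.Icc (x + 1) k, q i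
      ≤ ((1 + 1 / (⌊lam * (b : ℝ)⌋ : ℝ)) / (1 - Real.exp (-lam))) * (x : ℝ) := by
  have hlam : 0 < lam := (one_div_nonneg.2 b.cast_nonneg).trans_lt hlam₁
  have hkR : (2 : ℝ) ≤ k := by exact_mod_cast hk2
  have hp1 : lam / k < 1 := (div_lt_one (by linarith)).2 (by linarith)
  have hx0 : 0 ≤ x := by omega
  have hnum := costRobust_numerator_le hlam (by omega) (hk ▸ Int.lt_floor_add_one _) hp1 hx0 hxk.le
  have hden : 1 - exp (-lam) ≤ 1 - (1 - lam / k) ^ k := by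
    linarith [one_sub_div_zpow_le_exp_neg (by omega) (hlam₂.trans (by linarith) : lam ≤ k)]
  have hexp : 0 < 1 - exp (-lam) := sub_pos.2 (exp_lt_one_iff.2 (by linarith))
  change expectedCost b q k x ≤ _
  rw [expectedCost_eq_div hq hx0 hxk.le,
    expectedCost_geometric (by positivity) (by linarith) _ hx0 hxk.le, ← hk]
  calc _ ≤ (1 + 1 / k) * x / (1 - (1 - lam / k) ^ k) := by gcongr; linarith
    _ ≤ (1 + 1 / k) * x / (1 - exp (-lam)) := by gcongr
    _ = _ := by ring

/-- Case `y ≥ b`, `x < k` of Theorem 2 (robustness side): the expected cost of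
the CostRobust randomized algorithm is at most `((1 + 1/⌊λb⌋)/(1 − e^{−λ}))·x`. -/
theorem costRobust_robustness_case2 (b : ℕ) (hb : 2 ≤ b) (lam : ℝ)
    (hlam₁ : 1 / (b : ℝ) < lam) (hlam₂ : lam ≤ 1)
    (k : ℤ) (hk : k = ⌊lam * (b : ℝ)⌋) (hk2 : 2 ≤ k)
    (q : ℤ → ℝ)
    (hq : ∀ i ∈ Finset.Icc 1 k,
      q i = (1 - lam / (k : ℝ)) ^ (k - i) * (lam / (k : ℝ)) / (1 - (1 - lam / (k : ℝ)) ^ k))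
    (x : ℤ) (hx1 : 1 ≤ x) (hxk : x < k) :
    ∑ i ∈ Finset.Icc 1 x, ((b : ℝ) + (i : ℝ) - 1) * q i
        + (x : ℝ) * ∑ i ∈ Finset.Icc (x + 1) k, q i
      ≤ ((1 + 1 / (⌊lam * (b : ℝ)⌋ : ℝ)) / (1 - Real.exp (-lam))) * (x : ℝ) :=
  costRobust_robustness_case2_general b lam hlam₁ hlam₂ k hk hk2 q hq x hx1 hxk
end

section
/- Let b ≥ 2 be an integer and λ ∈ (1/b, 1] a real number. Set l = ⌈b/λ⌉ and define r_i = (1 − 1/(λl))^{l−i} · (1/(λl)) / (1 − (1 − 1/(λl))^l) for 1 ≤ i ≤ l. Then ∑_{i=1}^{l} (b + i − 1)·r_i ≤ ((1 + 1/⌊λb⌋)/(1 − e^{−λ}))·b. -/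
open Finset Real

/-!
Write `P = λl ≥ b` and `q = 1 - 1/P`. Raising each cost `b + i - 1` to `P + i - 1` only
increases the expectation, and against the weights `q^(l-i)/P` these costs sum to exactly `l`.
So the expected cost is at most `l / (1 - q^l) ≤ (b/λ + 1) / (1 - e^(-1/λ))`, using
`q^l ≤ e^(-l/P)`. Since `1/λ ≤ b/⌊λb⌋`, it remains to show
`(b/λ + 1)(1 - e^(-λ)) ≤ (b + 1/λ)(1 - e^(-1/λ))`, which splits into
`1 - e^(-λ) ≤ λ(1 - e^(-1/λ))` and `1 - e^(-λ) ≤ (1 - e^(-1/λ))/λ`. The second is monotonicity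
of `exp`; the first follows from `e^(-1/λ) ≤ λ/e` and `e^(-λ) ≥ 1 - λ + λ²/e` on `[0, 1]`.
-/

theorem Finset.sum_Icc_intCast_natCast {M : Type*} [AddCommMonoid M] (a b : ℕ) (f : ℤ → M) :
    ∑ i ∈ Icc (a : ℤ) b, f i = ∑ i ∈ Icc a b, f i := by
  symm
  refine sum_nbij (↑) (fun i hi ↦ ?_) Nat.cast_injective.injOn (fun i hi ↦ ?_) (fun _ _ ↦ rfl)
  · simp only [mem_Icc] at hi ⊢; omega
  · simp only [coe_Icc, Set.mem_Icc, Set.mem_image] at hi ⊢; exact ⟨i.toNat, by omega, by omega⟩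

theorem sum_Icc_add_sub_one_mul_geom (P : ℝ) (hP : P ≠ 0) (n : ℕ) :
    ∑ i ∈ Icc 1 n, (P + i - 1) * ((1 - 1 / P) ^ (n - i) * (1 / P)) = n := by
  induction n with
  | zero => simp
  | succ n ih =>
    rw [sum_Icc_succ_top (by omega), Nat.sub_self, pow_zero]
    have hshift : ∀ i ∈ Icc 1 n, (P + i - 1) * ((1 - 1 / P) ^ (n + 1 - i) * (1 / P))
        = (1 - 1 / P) * ((P + i - 1) * ((1 - 1 / P) ^ (n - i) * (1 / P))) := by
      intro i hi
      rw [Nat.sub_add_comm (mem_Icc.1 hi).2, pow_succ]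
      ring
    rw [sum_congr rfl hshift, ← mul_sum, ih]
    push_cast
    field_simp
    ring

theorem sum_Icc_add_sub_one_mul_le_div (b P : ℝ) (hbP : b ≤ P) (hP : 1 ≤ P) (l : ℤ) (hl : 0 ≤ l)
    (r : ℤ → ℝ) (hr : ∀ i ∈ Icc 1 l,
      r i = (1 - 1 / P) ^ (l - i) * (1 / P) / (1 - (1 - 1 / P) ^ l)) :
    ∑ i ∈ Icc 1 l, (b + i - 1) * r i ≤ l / (1 - (1 - 1 / P) ^ l) := by
  lift l to ℕ using hl
  have hP₀ : 0 < P := zero_lt_one.trans_le hP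
  set q := 1 - 1 / P
  have hq₀ : 0 ≤ q := sub_nonneg.2 (div_le_one_of_le₀ hP hP₀.le)
  have hq₁ : q ≤ 1 := sub_le_self _ (one_div_pos.2 hP₀).le
  have hD : 0 ≤ 1 - q ^ l := sub_nonneg.2 (pow_le_one₀ hq₀ hq₁)
  rw [← Nat.cast_one, sum_Icc_intCast_natCast, zpow_natCast]
  calc ∑ i ∈ Icc 1 l, (b + i - 1) * r i
      ≤ ∑ i ∈ Icc 1 l, (P + i - 1) * (q ^ (l - i) * (1 / P) / (1 - q ^ l)) := by
        refine sum_le_sum fun i hi ↦ ?_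
        rw [hr i (by simpa using hi), ← Nat.cast_sub (mem_Icc.1 hi).2, zpow_natCast,
          zpow_natCast]
        gcongr
    _ = (∑ i ∈ Icc 1 l, (P + i - 1) * (q ^ (l - i) * (1 / P))) / (1 - q ^ l) := by
        simp only [sum_div, mul_div_assoc]
    _ = l / (1 - q ^ l) := by rw [sum_Icc_add_sub_one_mul_geom P hP₀.ne' l]

theorem one_sub_one_div_mul_zpow_le_exp_neg_inv {x : ℝ} {l : ℤ} (hx : 0 < x) (h : 1 ≤ x * l) :
    (1 - 1 / (x * l)) ^ l ≤ exp (-x⁻¹) := by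
  have hl : 0 ≤ l := by
    have : (0 : ℝ) ≤ l := nonneg_of_mul_nonneg_right (zero_le_one.trans h) hx
    exact_mod_cast this
  lift l to ℕ using hl
  rw [zpow_natCast, Int.cast_natCast, ← div_div, one_div]
  exact one_sub_div_pow_le_exp_neg ((inv_le_iff_one_le_mul₀' hx).2 (by exact_mod_cast h))

theorem exp_mul_one_sub_add_sq_div_exp_one_le_one {x : ℝ} (hx₀ : 0 ≤ x) (hx₁ : x ≤ 1) :
    exp x * (1 - x + x ^ 2 / exp 1) ≤ 1 := by
  let k : ℝ → ℝ := fun x ↦ exp x * (1 - x + x ^ 2 / exp 1)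
  have hderiv (y : ℝ) : HasDerivAt k (exp y * y * (y - (exp 1 - 2)) / exp 1) y := by
    refine ((hasDerivAt_exp y).mul (((hasDerivAt_id' y).const_sub 1).add
      ((hasDerivAt_pow 2 y).div_const (exp 1)))).congr_deriv ?_
    simp only [Pi.add_apply]
    field_simp
    ring
  have hdiff : Differentiable ℝ k := fun y ↦ (hderiv y).differentiableAt
  have he : exp 1 - 2 ∈ Set.Icc (0 : ℝ) 1 := by
    constructor <;> linarith [exp_one_gt_d9, exp_one_lt_d9]
  rcases le_total x (exp 1 - 2) with hx | hx
  · have hanti : AntitoneOn k (Set.Icc 0 (exp 1 - 2)) := by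
      refine antitoneOn_of_deriv_nonpos (convex_Icc _ _) hdiff.continuous.continuousOn
        hdiff.differentiableOn fun y hy ↦ ?_
      rw [interior_Icc] at hy
      rw [(hderiv y).deriv]
      exact div_nonpos_of_nonpos_of_nonneg (mul_nonpos_of_nonneg_of_nonpos
        (mul_nonneg (exp_pos y).le hy.1.le) (by linarith [hy.2])) (exp_pos 1).le
    simpa [k] using hanti ⟨le_rfl, he.1⟩ ⟨hx₀, hx⟩ hx₀
  · have hmono : MonotoneOn k (Set.Icc (exp 1 - 2) 1) := by
      refine monotoneOn_of_deriv_nonneg (convex_Icc _ _) hdiff.continuous.continuousOn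
        hdiff.differentiableOn fun y hy ↦ ?_
      rw [interior_Icc] at hy
      rw [(hderiv y).deriv]
      exact div_nonneg (mul_nonneg (mul_nonneg (exp_pos y).le (by linarith [he.1, hy.1]))
        (by linarith [hy.1])) (exp_pos 1).le
    simpa [k, (exp_pos 1).ne'] using hmono ⟨hx, hx₁⟩ ⟨he.2, le_rfl⟩ hx₁

theorem one_sub_add_sq_div_exp_one_le_exp_neg {x : ℝ} (hx₀ : 0 ≤ x) (hx₁ : x ≤ 1) :
    1 - x + x ^ 2 / exp 1 ≤ exp (-x) := by
  calc 1 - x + x ^ 2 / exp 1 = exp x * (1 - x + x ^ 2 / exp 1) * exp (-x) := by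
        rw [mul_comm (exp x), mul_assoc, ← exp_add, add_neg_cancel, exp_zero, mul_one]
    _ ≤ exp (-x) :=
        mul_le_of_le_one_left (exp_pos _).le (exp_mul_one_sub_add_sq_div_exp_one_le_one hx₀ hx₁)

theorem exp_neg_inv_le_mul_exp_neg_one {x : ℝ} (hx : 0 < x) : exp (-x⁻¹) ≤ x * exp (-1) := by
  have h := add_one_le_exp (x⁻¹ - 1)
  rw [sub_add_cancel, sub_eq_add_neg, exp_add, inv_le_iff_one_le_mul₀' hx] at h
  rw [exp_neg, inv_le_iff_one_le_mul₀' (exp_pos _)]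
  linarith

theorem inv_mul_one_sub_exp_neg_le_one_sub_exp_neg_inv {x : ℝ} (hx₀ : 0 < x) (hx₁ : x ≤ 1) :
    x⁻¹ * (1 - exp (-x)) ≤ 1 - exp (-x⁻¹) := by
  have h₁ := one_sub_add_sq_div_exp_one_le_exp_neg hx₀.le hx₁
  have h₂ := exp_neg_inv_le_mul_exp_neg_one hx₀
  rw [div_eq_mul_inv, ← exp_neg] at h₁
  rw [inv_mul_le_iff₀ hx₀]
  nlinarith [mul_le_mul_of_nonneg_left h₂ hx₀.le]

theorem one_sub_exp_neg_le_inv_mul_one_sub_exp_neg_inv {x : ℝ} (hx₀ : 0 < x) (hx₁ : x ≤ 1) :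
    1 - exp (-x) ≤ x⁻¹ * (1 - exp (-x⁻¹)) := by
  have hx : x ≤ x⁻¹ := hx₁.trans (one_le_inv₀ hx₀ |>.2 hx₁)
  calc 1 - exp (-x) ≤ 1 - exp (-x⁻¹) := by gcongr
    _ ≤ x⁻¹ * (1 - exp (-x⁻¹)) := by
      refine le_mul_of_one_le_left (sub_nonneg.2 (exp_le_one_iff.2 ?_)) (one_le_inv₀ hx₀ |>.2 hx₁)
      simp [hx₀.le]

theorem one_sub_exp_neg_pos {x : ℝ} (hx : 0 < x) : 0 < 1 - exp (-x) :=
  sub_pos.2 (exp_lt_one_iff.2 (neg_neg_of_pos hx))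

theorem div_one_sub_exp_neg_inv_le {B x : ℝ} (hB : 0 ≤ B) (hx₀ : 0 < x) (hx₁ : x ≤ 1) :
    (B * x⁻¹ + 1) / (1 - exp (-x⁻¹)) ≤ (B + x⁻¹) / (1 - exp (-x)) := by
  have h₁ := inv_mul_one_sub_exp_neg_le_one_sub_exp_neg_inv hx₀ hx₁
  have h₂ := one_sub_exp_neg_le_inv_mul_one_sub_exp_neg_inv hx₀ hx₁
  rw [div_le_div_iff₀ (one_sub_exp_neg_pos (inv_pos.2 hx₀)) (one_sub_exp_neg_pos hx₀)]
  nlinarith [mul_le_mul_of_nonneg_left h₁ hB]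

/-- Case `y < b`, `x ≥ l` of Theorem 2 (robustness side): the expected cost of
the CostRobust randomized algorithm is at most `((1 + 1/⌊λb⌋)/(1 − e^{−λ}))·b`. -/
theorem costRobust_robustness_case4 (b : ℕ) (hb : 2 ≤ b) (lam : ℝ)
    (hlam₁ : 1 / (b : ℝ) < lam) (hlam₂ : lam ≤ 1)
    (l : ℤ) (hl : l = ⌈(b : ℝ) / lam⌉)
    (r : ℤ → ℝ)
    (hr : ∀ i ∈ Finset.Icc 1 l,
      r i = (1 - 1 / (lam * (l : ℝ))) ^ (l - i) * (1 / (lam * (l : ℝ)))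
              / (1 - (1 - 1 / (lam * (l : ℝ))) ^ l)) :
    ∑ i ∈ Finset.Icc 1 l, ((b : ℝ) + (i : ℝ) - 1) * r i
      ≤ ((1 + 1 / (⌊lam * (b : ℝ)⌋ : ℝ)) / (1 - Real.exp (-lam))) * (b : ℝ) := by
  have hb₂ : (2 : ℝ) ≤ b := by exact_mod_cast hb
  have hlam : 0 < lam := (by positivity : (0 : ℝ) < 1 / b).trans hlam₁
  have hbl : (b : ℝ) ≤ lam * l := by rw [hl, ← div_le_iff₀' hlam]; exact Int.le_ceil _
  have hl₀ : 0 ≤ l := hl ▸ Int.ceil_nonneg (by positivity)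
  have hm : (1 : ℝ) ≤ ⌊lam * b⌋ := by
    rw [div_lt_iff₀ (by positivity)] at hlam₁
    exact_mod_cast Int.le_floor.2 (by push_cast; linarith)
  have hE := one_sub_exp_neg_pos hlam
  have hE' := one_sub_exp_neg_pos (inv_pos.2 hlam)
  calc ∑ i ∈ Icc 1 l, ((b : ℝ) + i - 1) * r i
      ≤ l / (1 - (1 - 1 / (lam * l)) ^ l) :=
        sum_Icc_add_sub_one_mul_le_div b (lam * l) hbl (by linarith) l hl₀ r hr
    _ ≤ l / (1 - exp (-lam⁻¹)) := by
        have := one_sub_one_div_mul_zpow_le_exp_neg_inv (l := l) hlam (by linarith)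
        gcongr
    _ ≤ (b * lam⁻¹ + 1) / (1 - exp (-lam⁻¹)) := by
        gcongr
        rw [hl, ← div_eq_mul_inv]
        exact (Int.ceil_lt_add_one _).le
    _ ≤ (b + lam⁻¹) / (1 - exp (-lam)) := div_one_sub_exp_neg_inv_le b.cast_nonneg hlam hlam₂
    _ ≤ (b + b / ⌊lam * b⌋) / (1 - exp (-lam)) := by
        gcongr
        rw [le_div_iff₀ (by linarith), inv_mul_le_iff₀ hlam]
        exact Int.floor_le _
    _ = ((1 + 1 / ⌊lam * b⌋) / (1 - exp (-lam))) * b := by ring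
end

section
/- Let b ≥ 2 be an integer and λ ∈ (1/b, 1] a real number. Set l = ⌈b/λ⌉ and define r_i = (1 − 1/(λl))^{l−i} · (1/(λl)) / (1 − (1 − 1/(λl))^l) for 1 ≤ i ≤ l. Then ∑_{i=1}^{l} (b + i − 1)·r_i ≤ l/(1 − e^{−1/λ}). -/
/-!
Write `q = 1 - p` with `p = 1/(λl)`. Since `b ≤ λl`, the summand `(b + i - 1) q^(l-i) p` is at most
`(1 + (i-1) p) q^(l-i) = i q^(l-i) - (i-1) q^(l-i+1)`, so the unnormalised sum telescopes to at
most `l`. The normaliser `1 - q^l` is at least `1 - e^(-1/λ)` because `q^l ≤ e^(-pl) = e^(-1/λ)`.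
-/

open Finset Real

theorem sum_Icc_one_intCast_eq_sum_range {M : Type*} [AddCommMonoid M] (f : ℤ → M) (n : ℕ) :
    ∑ i ∈ Icc (1 : ℤ) n, f i = ∑ j ∈ range n, f (j + 1) :=
  sum_nbij' (fun i ↦ (i - 1).toNat) (fun j ↦ j + 1) (by intro i; simp; omega) (by intro j; simp)
    (by intro i; simp; omega) (by intro j; simp) (by intro i hi; simp at hi; congr; omega)

theorem sum_range_one_add_mul_mul_one_sub_pow {R : Type*} [CommRing R] (p : R) (n : ℕ) :
    ∑ j ∈ range n, (1 + j * p) * (1 - p) ^ (n - 1 - j) = n := by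
  have step : ∀ j ∈ range n, (1 + j * p) * (1 - p) ^ (n - 1 - j)
      = (j + 1 : ℕ) * (1 - p) ^ (n - (j + 1)) - j * (1 - p) ^ (n - j) := by
    intro j hj
    rw [show n - j = n - 1 - j + 1 by grind, show n - (j + 1) = n - 1 - j by omega]
    push_cast; ring
  rw [sum_congr rfl step, sum_range_sub (fun j ↦ (j : R) * (1 - p) ^ (n - j))]
  simp

theorem sum_add_mul_one_sub_pow_mul_le {p c : ℝ} (hp : p ≤ 1) (hcp : c * p ≤ 1)
    (n : ℕ) : ∑ j ∈ range n, (c + j) * ((1 - p) ^ (n - 1 - j) * p) ≤ n := by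
  calc ∑ j ∈ range n, (c + j) * ((1 - p) ^ (n - 1 - j) * p)
      ≤ ∑ j ∈ range n, (1 + j * p) * (1 - p) ^ (n - 1 - j) := by
        refine sum_le_sum fun j _ ↦ ?_
        have hcost : (c + j) * p ≤ 1 + j * p := by linarith
        calc (c + j) * ((1 - p) ^ (n - 1 - j) * p) = (c + j) * p * (1 - p) ^ (n - 1 - j) := by ring
          _ ≤ _ := mul_le_mul_of_nonneg_right hcost (pow_nonneg (by linarith) _)
    _ = n := sum_range_one_add_mul_mul_one_sub_pow p n

theorem one_sub_one_div_mul_pow_le_exp_neg {lam : ℝ} (hlam : 0 < lam) {n : ℕ}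
    (hn : 1 ≤ lam * n) : (1 - 1 / (lam * n)) ^ n ≤ exp (-(1 / lam)) := by
  rw [← div_div]
  refine one_sub_div_pow_le_exp_neg ?_
  rwa [div_le_iff₀ hlam, mul_comm]

theorem costRobust_consistency_case4_general (b : ℕ) (hb : 2 ≤ b) (lam : ℝ)
    (hlam₁ : 1 / (b : ℝ) < lam)
    (l : ℤ) (hl : l = ⌈(b : ℝ) / lam⌉)
    (r : ℤ → ℝ)
    (hr : ∀ i ∈ Finset.Icc 1 l,
      r i = (1 - 1 / (lam * (l : ℝ))) ^ (l - i) * (1 / (lam * (l : ℝ)))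
              / (1 - (1 - 1 / (lam * (l : ℝ))) ^ l)) :
    ∑ i ∈ Finset.Icc 1 l, ((b : ℝ) + (i : ℝ) - 1) * r i
      ≤ (l : ℝ) / (1 - Real.exp (-(1 / lam))) := by
  have hlam : 0 < lam := lt_of_le_of_lt (by positivity) hlam₁
  obtain ⟨n, rfl⟩ := Int.eq_ofNat_of_zero_le (hl ▸ Int.ceil_nonneg (by positivity))
  have hbn : (b : ℝ) ≤ lam * n := by
    have := hl ▸ Int.le_ceil ((b : ℝ) / lam)
    push_cast at this
    rwa [div_le_iff₀ hlam, mul_comm] at this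
  have hb₁ : (1 : ℝ) ≤ b := by exact_mod_cast (by omega : 1 ≤ b)
  set p := 1 / (lam * n) with hp
  have hp₀ : 0 ≤ p := by positivity
  have hbp : b * p ≤ 1 := by
    rw [hp, mul_one_div]; exact div_le_one_of_le₀ hbn (by positivity)
  have hp₁ : p ≤ 1 := le_trans (le_mul_of_one_le_left hp₀ hb₁) hbp
  have hexp : (1 - p) ^ n ≤ exp (-(1 / lam)) :=
    one_sub_one_div_mul_pow_le_exp_neg hlam (by linarith)
  have hexp_lt : exp (-(1 / lam)) < 1 := exp_lt_one_iff.mpr (by simp [hlam])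
  calc ∑ i ∈ Icc 1 (n : ℤ), ((b : ℝ) + (i : ℝ) - 1) * r i
      = (∑ j ∈ range n, (b + j) * ((1 - p) ^ (n - 1 - j) * p)) / (1 - (1 - p) ^ n) := by
        rw [sum_Icc_one_intCast_eq_sum_range, sum_div]
        refine sum_congr rfl fun j hj ↦ ?_
        simp only [mem_range] at hj
        rw [hr _ (by simp only [mem_Icc]; omega),
          show (n : ℤ) - (j + 1) = (n - 1 - j : ℕ) by omega]
        push_cast
        simp only [zpow_natCast, ← hp]
        ring
    _ ≤ n / (1 - (1 - p) ^ n) :=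
        div_le_div_of_nonneg_right (sum_add_mul_one_sub_pow_mul_le hp₁ hbp n)
          (sub_nonneg.mpr (pow_le_one₀ (by linarith) (by linarith)))
    _ ≤ ((n : ℤ) : ℝ) / (1 - exp (-(1 / lam))) := by
        push_cast
        exact div_le_div_of_nonneg_left (by positivity) (by linarith) (by linarith)

/-- Case `y < b`, `x ≥ l` of Theorem 2 (consistency side): the expected cost of
the CostRobust randomized algorithm is at most `l/(1 − e^{−1/λ})`. -/
theorem costRobust_consistency_case4 (b : ℕ) (hb : 2 ≤ b) (lam : ℝ)
    (hlam₁ : 1 / (b : ℝ) < lam) (hlam₂ : lam ≤ 1)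
    (l : ℤ) (hl : l = ⌈(b : ℝ) / lam⌉)
    (r : ℤ → ℝ)
    (hr : ∀ i ∈ Finset.Icc 1 l,
      r i = (1 - 1 / (lam * (l : ℝ))) ^ (l - i) * (1 / (lam * (l : ℝ)))
              / (1 - (1 - 1 / (lam * (l : ℝ))) ^ l)) :
    ∑ i ∈ Finset.Icc 1 l, ((b : ℝ) + (i : ℝ) - 1) * r i
      ≤ (l : ℝ) / (1 - Real.exp (-(1 / lam))) :=
  costRobust_consistency_case4_general b hb lam hlam₁ l hl r hr
end

section
/- For every real number λ with 0 < λ ≤ 1, one has 1/(1 − e^{−1/λ}) ≤ λ/(1 − e^{−λ}); equivalently, λ·(1 − e^{−1/λ}) ≥ 1 − e^{−λ}. -/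
/-!
Put `φ(x) = e^{-x} - 1 + x`. The inequality splits into two bounds, both tight at `λ = 1`:
`e^{-1/λ} ≤ λ/e`, which is `y e^{-y} ≤ 1/e` at `y = 1/λ`, and `λ²/e ≤ φ(λ)` on `[0, 1]`;
then `λ(1 - e^{-1/λ}) ≥ λ - λ²/e ≥ 1 - e^{-λ}`. The second bound is tight at both ends of
`[0, 1]`, so it is proved separately on each half: by a Taylor bound at `0` on `[0, 1/2]` and by
expanding `e^{-λ} = e^{1-λ}/e` around `1` on `[1/2, 1]`.
-/

open Real

lemma exp_neg_one_div_le_mul_exp_neg_one {x : ℝ} (hx : 0 < x) :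
    exp (-(1 / x)) ≤ x * exp (-1) := by
  have h := mul_exp_neg_le_exp_neg_one (1 / x)
  rwa [one_div_mul_eq_div, div_le_iff₀ hx, mul_comm] at h

lemma one_sub_add_sq_mul_exp_neg_one_le_exp_neg_of_le_half {x : ℝ} (h0 : 0 ≤ x) (h1 : x ≤ 1 / 2) :
    1 - x + x ^ 2 * exp (-1) ≤ exp (-x) := by
  have taylor : 1 - x + x ^ 2 / 2 - 2 * x ^ 3 / 9 ≤ exp (-x) := by
    have h := Real.exp_bound (x := -x) (n := 3) (by rw [abs_neg, abs_of_nonneg h0]; linarith)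
      (by norm_num)
    rw [abs_neg, abs_of_nonneg h0] at h
    norm_num [Finset.sum_range_succ, Nat.factorial] at h
    linarith [(abs_sub_le_iff.1 h).2]
  have gap : 0 ≤ x ^ 2 * (1 / 2 - 2 * x / 9 - exp (-1)) :=
    mul_nonneg (sq_nonneg x) (by linarith [exp_neg_one_lt_d9])
  linarith

lemma one_sub_add_sq_mul_exp_neg_one_le_exp_neg_of_half_le {x : ℝ} (h0 : 1 / 2 ≤ x) (h1 : x ≤ 1) :
    1 - x + x ^ 2 * exp (-1) ≤ exp (-x) := by
  obtain ⟨v, rfl⟩ : ∃ v, x = 1 - v := ⟨1 - x, by ring⟩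
  have taylor := quadratic_le_exp_of_nonneg (x := v) (by linarith)
  have split : exp (-(1 - v)) = exp v * exp (-1) := by rw [← exp_add]; ring_nf
  have gap : 0 ≤ v * (exp (-1) * (3 - v / 2) - 1) :=
    mul_nonneg (by linarith) (by nlinarith [exp_neg_one_gt_d9])
  rw [split]
  nlinarith [exp_pos (-1)]

lemma one_sub_add_sq_mul_exp_neg_one_le_exp_neg {x : ℝ} (h0 : 0 ≤ x) (h1 : x ≤ 1) :
    1 - x + x ^ 2 * exp (-1) ≤ exp (-x) := by
  rcases le_total x (1 / 2) with hx | hx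
  · exact one_sub_add_sq_mul_exp_neg_one_le_exp_neg_of_le_half h0 hx
  · exact one_sub_add_sq_mul_exp_neg_one_le_exp_neg_of_half_le hx h1

lemma one_sub_exp_neg_le_mul_one_sub_exp_neg_one_div {x : ℝ} (h0 : 0 < x) (h1 : x ≤ 1) :
    1 - exp (-x) ≤ x * (1 - exp (-(1 / x))) :=
  calc 1 - exp (-x) ≤ x * (1 - x * exp (-1)) := by
        nlinarith [one_sub_add_sq_mul_exp_neg_one_le_exp_neg h0.le h1]
    _ ≤ x * (1 - exp (-(1 / x))) := by
        gcongr
        exact exp_neg_one_div_le_mul_exp_neg_one h0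

/-- For `0 < λ ≤ 1`: `1/(1 − e^{−1/λ}) ≤ λ/(1 − e^{−λ})`; equivalently,
`λ·(1 − e^{−1/λ}) ≥ 1 − e^{−λ}`. -/
theorem one_div_one_sub_exp_le (lam : ℝ) (h₀ : 0 < lam) (h₁ : lam ≤ 1) :
    1 / (1 - Real.exp (-(1 / lam))) ≤ lam / (1 - Real.exp (-lam)) ∧
    lam * (1 - Real.exp (-(1 / lam))) ≥ 1 - Real.exp (-lam) := by
  have key := one_sub_exp_neg_le_mul_one_sub_exp_neg_one_div h₀ h₁
  have pos_inv : 0 < 1 - exp (-(1 / lam)) :=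
    sub_pos.2 (exp_lt_one_iff.2 (neg_lt_zero.2 (one_div_pos.2 h₀)))
  have pos : 0 < 1 - exp (-lam) := sub_pos.2 (exp_lt_one_iff.2 (neg_lt_zero.2 h₀))
  refine ⟨?_, key⟩
  rw [div_le_div_iff₀ pos_inv pos, one_mul]
  exact key
end

section
/- Let b ≥ 2 and x ≥ 1 be integers, let λ be a real number with 1/(b−1) < λ ≤ 1, let b_s be a real number with 0 < b_s ≤ b + 1, and let d be an integer with 1 ≤ d ≤ ⌈b_s/λ⌉. Define ALG = b + d − 1 if d ≤ x and ALG = x otherwise, and OPT = min(b, x). Then 0 ≤ (ALG − OPT)/OPT ≤ b. -/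
/-! The buy day is tiny compared with `b`: since `1/λ < b - 1` and `b_s ≤ b + 1`, we get
`b_s / λ ≤ b² - 1`, hence `d ≤ b² - 1`. With `d ≤ b² + 1` the expert never pays more than
`(b + 1) · OPT`: if it buys (on day `d ≤ x`) it pays at most `b + b²` against `OPT = b`, or at
most `b + x - 1` against `OPT = x`; if it never buys it pays `x < d`, which matters only when
`OPT = b`. -/

/-- Rent for `d - 1` days, then buy at cost `b` on day `d` if the season lasts that long. -/
def skiCost (b x d : ℤ) : ℤ := if d ≤ x then b + d - 1 else x

theorem min_le_skiCost {b x d : ℤ} (hd : 1 ≤ d) : min b x ≤ skiCost b x d := by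
  unfold skiCost
  split_ifs <;> omega

theorem skiCost_le_succ_mul_min {b x d : ℤ} (hb : 0 ≤ b) (hx : 1 ≤ x) (hd : d ≤ b ^ 2 + 1) :
    skiCost b x d ≤ (b + 1) * min b x := by
  unfold skiCost
  rcases le_total b x with hbx | hxb
  · rw [min_eq_left hbx]
    split_ifs <;> nlinarith
  · rw [min_eq_right hxb]
    split_ifs <;> nlinarith

theorem ceil_div_le_sq_sub_one {b : ℤ} {lam b_s : ℝ} (hb : 2 ≤ b)
    (hlam : 1 / ((b : ℝ) - 1) < lam) (hbs : b_s ≤ (b : ℝ) + 1) :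
    ⌈b_s / lam⌉ ≤ b ^ 2 - 1 := by
  have hb₁ : (0 : ℝ) < b - 1 := by
    have : (2 : ℝ) ≤ b := by exact_mod_cast hb
    linarith
  have hlam₀ : 0 < lam := (one_div_pos.mpr hb₁).trans hlam
  have hinv : 1 / lam < b - 1 := by rwa [one_div_lt hlam₀ hb₁]
  rw [Int.ceil_le]
  push_cast
  calc b_s / lam = b_s * (1 / lam) := by ring
    _ ≤ (b + 1) * (b - 1) := by gcongr
    _ = (b : ℝ) ^ 2 - 1 := by ring

theorem normalized_loss_mem_Icc {K : Type*} [Field K] [LinearOrder K] [IsStrictOrderedRing K]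
    {A O c : K} (hO : 0 < O) (hlow : O ≤ A) (hup : A ≤ (c + 1) * O) :
    0 ≤ (A - O) / O ∧ (A - O) / O ≤ c := by
  refine ⟨div_nonneg (sub_nonneg.mpr hlow) hO.le, ?_⟩
  rw [div_le_iff₀ hO]
  linarith

theorem ski_expert_loss_bounded_general (b x : ℤ) (hb : 2 ≤ b) (hx : 1 ≤ x)
    (lam : ℝ) (hlam₁ : 1 / ((b : ℝ) - 1) < lam)
    (b_s : ℝ) (hbs₁ : b_s ≤ (b : ℝ) + 1)
    (d : ℤ) (hd₁ : 1 ≤ d) (hd₂ : d ≤ ⌈b_s / lam⌉)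
    (ALG OPT : ℝ)
    (hALG : ALG = if d ≤ x then (b : ℝ) + (d : ℝ) - 1 else (x : ℝ))
    (hOPT : OPT = min (b : ℝ) (x : ℝ)) :
    0 ≤ (ALG - OPT) / OPT ∧ (ALG - OPT) / OPT ≤ (b : ℝ) := by
  have hd : d ≤ b ^ 2 + 1 := by
    have := ceil_div_le_sq_sub_one hb hlam₁ hbs₁
    omega
  have hALG' : ALG = skiCost b x d := by
    rw [hALG, skiCost]
    split_ifs <;> push_cast <;> rfl
  have hOPT' : OPT = ((min b x : ℤ) : ℝ) := by rw [hOPT, Int.cast_min]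
  rw [hALG', hOPT']
  apply normalized_loss_mem_Icc
  · exact_mod_cast lt_min (by omega) hx
  · exact_mod_cast min_le_skiCost hd₁
  · exact_mod_cast skiCost_le_succ_mul_min (by omega) hx hd

/-- Theorem 3: the normalized loss of a ski expert in one round of the sequential
ski-rental problem is bounded: `0 ≤ (ALG − OPT)/OPT ≤ b`. -/
theorem ski_expert_loss_bounded (b x : ℤ) (hb : 2 ≤ b) (hx : 1 ≤ x)
    (lam : ℝ) (hlam₁ : 1 / ((b : ℝ) - 1) < lam) (hlam₂ : lam ≤ 1)
    (b_s : ℝ) (hbs₀ : 0 < b_s) (hbs₁ : b_s ≤ (b : ℝ) + 1)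
    (d : ℤ) (hd₁ : 1 ≤ d) (hd₂ : d ≤ ⌈b_s / lam⌉)
    (ALG OPT : ℝ)
    (hALG : ALG = if d ≤ x then (b : ℝ) + (d : ℝ) - 1 else (x : ℝ))
    (hOPT : OPT = min (b : ℝ) (x : ℝ)) :
    0 ≤ (ALG - OPT) / OPT ∧ (ALG - OPT) / OPT ≤ (b : ℝ) :=
  ski_expert_loss_bounded_general b x hb hx lam hlam₁ b_s hbs₁ d hd₁ hd₂ ALG OPT hALG hOPT
end

section
/- Let m ≥ 2 be an integer, let Δ > 0, δ > 0, ε > 0, T ≥ 1 and c > 1 be real numbers, set γ_min = δε²/(Tc) and A = (2m/(c−1))·(1 + TcΔ/(δε²)). Then for every real t with t − 1 ≥ max((8/Δ²)·log A, (1/(2Δ²·log m))·(log A)²), one has e^{−Δ·√(2(t−1)·log m)} + e^{−(t−1)·Δ²/8} ≤ (δε²/T − γ_min)/(m·(γ_min + Δ)). -/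
/-! Both exponents are at least `log A`: the first because `(log A)² ≤ 2Δ²(t − 1) log m`,
the second because `log A ≤ (t − 1)Δ²/8`. Hence each exponential is at most `1/A`, and the
right-hand side simplifies to exactly `2/A`. -/

open Real

lemma exp_neg_le_inv_of_log_le {A x : ℝ} (hA : 0 < A) (h : log A ≤ x) : exp (-x) ≤ A⁻¹ := by
  rw [← exp_log hA, ← exp_neg]
  exact exp_le_exp.mpr (neg_le_neg h)

lemma le_mul_sqrt_of_sq_le_sq_mul {a b u : ℝ} (hb : 0 ≤ b) (h : a ^ 2 ≤ b ^ 2 * u) :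
    a ≤ b * √u :=
  calc a ≤ |a| := le_abs_self a
    _ ≤ √(b ^ 2 * u) := abs_le_sqrt h
    _ = b * √u := by rw [sqrt_mul (sq_nonneg b), sqrt_sq hb]

/-- Analytic core of Theorem 6: with `γ_min = δε²/(Tc)` and
`A = (2m/(c−1))·(1 + TcΔ/(δε²))`, once
`t − 1 ≥ max((8/Δ²)·log A, (1/(2Δ²·log m))·(log A)²)`, the exponential sum
`e^{−Δ√(2(t−1) log m)} + e^{−(t−1)Δ²/8}` is at most
`(δε²/T − γ_min)/(m(γ_min + Δ))`. -/
theorem exp_sum_small_after_tstar (m : ℕ) (hm : 2 ≤ m)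
    (Δ δ ε T c : ℝ) (hΔ : 0 < Δ) (hδ : 0 < δ) (hε : 0 < ε) (hT : 1 ≤ T) (hc : 1 < c)
    (γmin : ℝ) (hγ : γmin = δ * ε ^ 2 / (T * c))
    (A : ℝ) (hA : A = (2 * (m : ℝ) / (c - 1)) * (1 + T * c * Δ / (δ * ε ^ 2))) :
    ∀ t : ℝ,
      t - 1 ≥ max ((8 / Δ ^ 2) * Real.log A)
                  ((1 / (2 * Δ ^ 2 * Real.log m)) * (Real.log A) ^ 2) →
      Real.exp (-Δ * Real.sqrt (2 * (t - 1) * Real.log m))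
          + Real.exp (-(t - 1) * Δ ^ 2 / 8)
        ≤ (δ * ε ^ 2 / T - γmin) / ((m : ℝ) * (γmin + Δ)) := by
  intro t ht
  have hlogm : 0 < log m := log_pos (by exact_mod_cast hm)
  have hc1 : 0 < c - 1 := sub_pos.mpr hc
  have hA0 : 0 < A := by rw [hA]; positivity
  have hrhs : (δ * ε ^ 2 / T - γmin) / ((m : ℝ) * (γmin + Δ)) = A⁻¹ + A⁻¹ := by
    have : (m : ℝ) ≠ 0 := by positivity
    have : T ≠ 0 := by positivity
    subst hγ hA
    field_simp
    ring
  have hsqrt : log A ≤ Δ * √(2 * (t - 1) * log m) := by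
    refine le_mul_sqrt_of_sq_le_sq_mul hΔ.le ?_
    have h := (le_max_right _ _).trans ht
    rw [one_div_mul_eq_div, div_le_iff₀ (by positivity)] at h
    linarith
  have hquad : log A ≤ (t - 1) * Δ ^ 2 / 8 := by
    have h := (le_max_left _ _).trans ht
    rw [div_mul_eq_mul_div, div_le_iff₀ (by positivity)] at h
    linarith
  rw [hrhs, neg_mul, neg_mul, neg_div]
  exact add_le_add (exp_neg_le_inv_of_log_le hA0 hsqrt) (exp_neg_le_inv_of_log_le hA0 hquad)
end
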